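/- Let 𝕋 be a generator set of R such that every element of 𝕋 is self-inverse (T ∘ T is the identity on R for all T ∈ 𝕋) and 𝕋 is pointwise-disjoint (for all P, T ∈ G(𝕋), if P ψ = T ψ for some ψ ∈ R then P = T). Then for every nonempty A ⊆ Fin n, all equivalence classes of ∼_A on R have the same cardinality, equal to |O_A|. -/

import Mathlib

open Finset

/-- Restriction of a computational basis state `ψ : Fin n → Bool` to a subsystem `A`. -/
def restrict {n : ℕ} (ψ : Fin n → Bool) (A : Finset (Fin n)) : {x // x ∈ A} → Bool :=
  fun a => ψ a.1

/-- The quotient set `R/∼_A`: the set of equivalence classes of the relation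
`ψ ∼_A φ ↔ ψ|_A = φ|_A` on `R`. -/
def classes {n : ℕ} (R : Finset (Fin n → Bool)) (A : Finset (Fin n)) :
    Set (Set (Fin n → Bool)) :=
  {C | ∃ ψ ∈ R, C = {φ | φ ∈ R ∧ restrict φ A = restrict ψ A}}

/-- `A₁ ∼_R A₂`: the unordered pairs of quotient sets coincide. -/
def simR {n : ℕ} (R : Finset (Fin n → Bool)) (A₁ A₂ : Finset (Fin n)) : Prop :=
  ({classes R A₁, classes R A₁ᶜ} : Set (Set (Set (Fin n → Bool)))) =
    {classes R A₂, classes R A₂ᶜ}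

/-- `G(𝕋)`: the set of all finite compositions of elements of `T`
(the empty composition being the identity). -/
def Gset {α : Type*} (T : Set (α → α)) : Set (α → α) :=
  {P | ∃ l : List (α → α), (∀ f ∈ l, f ∈ T) ∧ P = l.foldr (· ∘ ·) id}

/-- `𝕋` is a generator set of `R`: it contains the identity, finite compositions of its
elements commute, it acts transitively on `R`, and it is locally invariant. -/
def IsGenSet {n : ℕ} (R : Finset (Fin n → Bool))
    (T : Set ({ψ // ψ ∈ R} → {ψ // ψ ∈ R})) : Prop :=
  id ∈ T ∧
  (∀ P ∈ Gset T, ∀ Q ∈ Gset T, P ∘ Q = Q ∘ P) ∧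
  (∀ ψ φ : {ψ // ψ ∈ R}, ∃ P ∈ Gset T, P ψ = φ) ∧
  (∀ P ∈ T, ∀ A : Finset (Fin n), A.Nonempty →
    (∃ ψ : {ψ // ψ ∈ R}, restrict (↑(P ψ)) A = restrict (↑ψ) A) →
    ∀ φ : {ψ // ψ ∈ R}, restrict (↑(P φ)) A = restrict (↑φ) A)

/-- The operator set `O_A` of a subsystem `A` (for `A = ∅` this is all of `G(𝕋)`). -/
def opSet {n : ℕ} (R : Finset (Fin n → Bool))
    (T : Set ({ψ // ψ ∈ R} → {ψ // ψ ∈ R})) (A : Finset (Fin n)) :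
    Set ({ψ // ψ ∈ R} → {ψ // ψ ∈ R}) :=
  {P | P ∈ Gset T ∧ ∀ ψ : {ψ // ψ ∈ R}, restrict (↑(P ψ)) A = restrict (↑ψ) A}

/-! Local invariance on a single site `{i}` forces every generator either to fix the `i`-th bit
of all states or to flip it in all of them, so each `P ∈ G(𝕋)` acts on the `i`-th bit as
`xor` with a constant. Hence an operator that fixes `A` on one state fixes `A` on every state,
and `P ↦ P ψ` maps `O_A` into the class of `ψ`: injectively by pointwise disjointness and onto
by transitivity. -/

lemma restrict_eq_restrict_iff {n : ℕ} {ψ φ : Fin n → Bool} {A : Finset (Fin n)} :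
    restrict ψ A = restrict φ A ↔ ∀ i ∈ A, ψ i = φ i := by
  simp only [funext_iff, _root_.restrict, Subtype.forall]

@[elab_as_elim]
lemma Gset.induction_on {α : Type*} {T : Set (α → α)} {p : (α → α) → Prop} {P : α → α}
    (hP : P ∈ Gset T) (id_mem : p id) (comp_mem : ∀ f ∈ T, ∀ g, p g → p (f ∘ g)) : p P := by
  obtain ⟨l, hl, rfl⟩ := hP
  induction l with
  | nil => exact id_mem
  | cons f l ih =>
    exact comp_mem f (hl f List.mem_cons_self) _ (ih fun g hg => hl g (List.mem_cons_of_mem _ hg))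

namespace IsGenSet

variable {n : ℕ} {R : Finset (Fin n → Bool)} {T : Set ({ψ // ψ ∈ R} → {ψ // ψ ∈ R})}

lemma exists_xor_of_mem (hT : IsGenSet R T) {f : {ψ // ψ ∈ R} → {ψ // ψ ∈ R}} (hf : f ∈ T)
    (i : Fin n) : ∃ b : Bool, ∀ φ : {ψ // ψ ∈ R}, (f φ).1 i = (φ.1 i ^^ b) := by
  by_cases hfix : ∃ ρ : {ψ // ψ ∈ R}, (f ρ).1 i = ρ.1 i
  · obtain ⟨ρ, hρ⟩ := hfix
    have hloc := hT.2.2.2 f hf {i} (singleton_nonempty i)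
      ⟨ρ, restrict_eq_restrict_iff.2 (by simpa using hρ)⟩
    exact ⟨false, fun φ => by simpa [restrict_eq_restrict_iff] using hloc φ⟩
  · push Not at hfix
    exact ⟨true, fun φ => by simpa using Bool.eq_not.2 (hfix φ)⟩

lemma exists_xor_of_mem_Gset (hT : IsGenSet R T) {P : {ψ // ψ ∈ R} → {ψ // ψ ∈ R}}
    (hP : P ∈ Gset T) (i : Fin n) :
    ∃ b : Bool, ∀ φ : {ψ // ψ ∈ R}, (P φ).1 i = (φ.1 i ^^ b) := by
  refine Gset.induction_on hP ⟨false, fun φ => by simp⟩ fun f hf g ⟨c, hg⟩ => ?_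
  obtain ⟨b, hf⟩ := hT.exists_xor_of_mem hf i
  exact ⟨c ^^ b, fun φ => by simp only [Function.comp_apply, hf, hg, Bool.xor_assoc]⟩

lemma restrict_apply_eq_of_mem_Gset (hT : IsGenSet R T) {P : {ψ // ψ ∈ R} → {ψ // ψ ∈ R}}
    (hP : P ∈ Gset T) {A : Finset (Fin n)} {ψ : {ψ // ψ ∈ R}}
    (hψ : restrict (P ψ : Fin n → Bool) A = restrict ψ A) (φ : {ψ // ψ ∈ R}) :
    restrict (P φ : Fin n → Bool) A = restrict φ A := by
  rw [restrict_eq_restrict_iff] at hψ ⊢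
  intro i hi
  obtain ⟨b, hb⟩ := hT.exists_xor_of_mem_Gset hP i
  have hψi : (ψ.1 i ^^ b) = ψ.1 i := (hb ψ).symm.trans (hψ i hi)
  have hb_false : b = false := by simpa using congrArg (ψ.1 i ^^ ·) hψi
  simp [hb, hb_false]

end IsGenSet

theorem class_card_eq_opSet_card_general {n : ℕ} (R : Finset (Fin n → Bool))
    (T : Set ({ψ // ψ ∈ R} → {ψ // ψ ∈ R})) (hT : IsGenSet R T)
    (hdisj : ∀ P ∈ Gset T, ∀ Q ∈ Gset T, (∃ ψ : {ψ // ψ ∈ R}, P ψ = Q ψ) → P = Q)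
    (A : Finset (Fin n)) (ψ : {ψ // ψ ∈ R}) :
    Nat.card {φ : {ψ // ψ ∈ R} | restrict (↑φ) A = restrict (↑ψ) A} =
      Nat.card (opSet R T A) := by
  let orbitMap : opSet R T A → {φ : {ψ // ψ ∈ R} | restrict (↑φ) A = restrict (↑ψ) A} :=
    fun P => ⟨P.1 ψ, P.2.2 ψ⟩
  have injective : orbitMap.Injective := by
    rintro ⟨P, hP, _⟩ ⟨Q, hQ, _⟩ h
    exact Subtype.ext (hdisj P hP Q hQ ⟨ψ, congrArg Subtype.val h⟩)
  have surjective : orbitMap.Surjective := by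
    rintro ⟨φ, hφ⟩
    obtain ⟨Q, hQ, rfl⟩ := hT.2.2.1 ψ φ
    exact ⟨⟨Q, hQ, hT.restrict_apply_eq_of_mem_Gset hQ hφ⟩, rfl⟩
  exact (Nat.card_congr (Equiv.ofBijective orbitMap ⟨injective, surjective⟩)).symm

/-- if the generator set consists of self-inverse operators and is
pointwise-disjoint, then every equivalence class of `∼_A` has cardinality `|O_A|`. -/
theorem class_card_eq_opSet_card {n : ℕ} (R : Finset (Fin n → Bool)) (hR : R.Nonempty)
    (T : Set ({ψ // ψ ∈ R} → {ψ // ψ ∈ R})) (hT : IsGenSet R T)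
    (hself : ∀ P ∈ T, P ∘ P = id)
    (hdisj : ∀ P ∈ Gset T, ∀ Q ∈ Gset T, (∃ ψ : {ψ // ψ ∈ R}, P ψ = Q ψ) → P = Q)
    (A : Finset (Fin n)) (hA : A.Nonempty) (ψ : {ψ // ψ ∈ R}) :
    Nat.card {φ : {ψ // ψ ∈ R} | restrict (↑φ) A = restrict (↑ψ) A} =
      Nat.card (opSet R T A) :=
  class_card_eq_opSet_card_general R T hT hdisj A ψ
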